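/- Let Σ be a polynomial orbit-finite set, M an orbit-finite monoid, and h : Σ* → M an equivariant monoid homomorphism satisfying condition (*). Then there is a finitely supported function E : Σ → Σ such that: (a) for every a ∈ Σ, if the J-class of h(a) contains an idempotent, then h(E(a)) is an idempotent J-equivalent to h(a) and E(a) has the same least support as h(E(a)); and (b) if a₁, a₂ ∈ Σ are such that h(a₁) and h(a₂) are J-equivalent, then E(a₁) and E(a₂) have the same least support. -/

import Mathlib

/-- Atoms: a fixed countably infinite set. -/
abbrev Atom : Type := ℕ

/-- Atom automorphisms: bijections of the atoms. -/
abbrev AtomPerm : Type := Equiv.Perm Atom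

/-- `x` (in a set with atoms `X`) is supported by the finite set `A` of atoms. -/
def SupportedBy {X : Type*} [MulAction AtomPerm X] (A : Finset Atom) (x : X) : Prop :=
  ∀ π : AtomPerm, (∀ a ∈ A, π a = a) → π • x = x

def FinitelySupported {X : Type*} [MulAction AtomPerm X] (x : X) : Prop :=
  ∃ A : Finset Atom, SupportedBy A x

def IsLeastSupport {X : Type*} [MulAction AtomPerm X] (A : Finset Atom) (x : X) : Prop :=
  SupportedBy A x ∧ ∀ B : Finset Atom, SupportedBy B x → A ⊆ B

/-- A function `f : X → Y` is supported by `A` if `f (π • x) = π • f x`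
for every `A`-automorphism `π`. -/
def FunSupportedBy {X Y : Type*} [MulAction AtomPerm X] [MulAction AtomPerm Y]
    (A : Finset Atom) (f : X → Y) : Prop :=
  ∀ π : AtomPerm, (∀ a ∈ A, π a = a) → ∀ x : X, f (π • x) = π • f x

/-- A function is equivariant if it commutes with all atom automorphisms. -/
def FunEquivariant {X Y : Type*} [MulAction AtomPerm X] [MulAction AtomPerm Y]
    (f : X → Y) : Prop :=
  ∀ (π : AtomPerm) (x : X), f (π • x) = π • f x

/-- A subset `S` of a set with atoms is supported by `A`
(as an element of the powerset with the induced action). -/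
def SetSupportedBy {Z : Type*} [MulAction AtomPerm Z] (A : Finset Atom) (S : Set Z) : Prop :=
  ∀ π : AtomPerm, (∀ a ∈ A, π a = a) → ∀ z : Z, z ∈ S ↔ π • z ∈ S

/-- A set with atoms is orbit-finite if every element is finitely supported and, for some
finite set `A` of atoms, it is a union of finitely many orbits of the group of
`A`-automorphisms. -/
def OrbitFinite (X : Type*) [MulAction AtomPerm X] : Prop :=
  (∀ x : X, FinitelySupported x) ∧
  ∃ (A : Finset Atom) (reps : Finset X),
    ∀ x : X, ∃ r ∈ reps, ∃ π : AtomPerm, (∀ a ∈ A, π a = a) ∧ π • r = x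

/-- The multiplication of a monoid with atoms is finitely supported. -/
def MulFinitelySupported (M : Type*) [Monoid M] [MulAction AtomPerm M] : Prop :=
  ∃ A : Finset Atom, ∀ π : AtomPerm, (∀ a ∈ A, π a = a) →
    ∀ x y : M, π • (x * y) = (π • x) * (π • y)

/-- An orbit-finite monoid: the underlying set is orbit-finite and
multiplication is finitely supported. -/
def OrbitFiniteMonoid (M : Type*) [Monoid M] [MulAction AtomPerm M] : Prop :=
  OrbitFinite M ∧ MulFinitelySupported M

/-- `x` is an infix of `y`. -/
def MInfix {M : Type*} [Monoid M] (x y : M) : Prop := ∃ a b : M, y = a * x * b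

/-- `x` is a prefix of `y`. -/
def MPrefix {M : Type*} [Monoid M] (x y : M) : Prop := ∃ a : M, y = x * a

/-- `x` is a suffix of `y`. -/
def MSuffix {M : Type*} [Monoid M] (x y : M) : Prop := ∃ a : M, y = a * x

def JEquiv {M : Type*} [Monoid M] (x y : M) : Prop := MInfix x y ∧ MInfix y x
def REquiv {M : Type*} [Monoid M] (x y : M) : Prop := MPrefix x y ∧ MPrefix y x
def LEquiv {M : Type*} [Monoid M] (x y : M) : Prop := MSuffix x y ∧ MSuffix y x

/-- A sequence of monoid elements is smooth if every element of the sequence can be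
recovered from the product of the whole sequence by multiplying on both sides. -/
def SmoothSeq {M : Type*} [Monoid M] (l : List M) : Prop :=
  ∀ x ∈ l, ∃ y z : M, y * l.prod * z = x

/-- Codes for polynomial orbit-finite sets: built from the atoms and singleton sets
by finite products and coproducts. -/
inductive PolyCode : Type where
  | atom : PolyCode
  | unit : PolyCode
  | prod : PolyCode → PolyCode → PolyCode
  | sum : PolyCode → PolyCode → PolyCode

/-- The polynomial orbit-finite set described by a code. -/
def PolyCode.interp : PolyCode → Type
  | .atom => Atom
  | .unit => Unit
  | .prod c d => c.interp × d.interp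
  | .sum c d => c.interp ⊕ d.interp

/-- The componentwise action of atom automorphisms on a polynomial orbit-finite set. -/
def PolyCode.act (π : AtomPerm) : (c : PolyCode) → c.interp → c.interp
  | .atom, a => π a
  | .unit, u => u
  | .prod c d, p => (c.act π p.1, d.act π p.2)
  | .sum c d, x => x.elim (fun a => Sum.inl (c.act π a)) (fun b => Sum.inr (d.act π b))

theorem PolyCode.act_one : ∀ (c : PolyCode) (x : c.interp), c.act 1 x = x
  | .atom, a => rfl
  | .unit, _ => rfl
  | .prod c d, p => by
      exact congrArg₂ Prod.mk (PolyCode.act_one c p.1) (PolyCode.act_one d p.2)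
  | .sum c d, x => by
      cases x with
      | inl a => exact congrArg Sum.inl (PolyCode.act_one c a)
      | inr b => exact congrArg Sum.inr (PolyCode.act_one d b)

theorem PolyCode.act_mul (π σ : AtomPerm) :
    ∀ (c : PolyCode) (x : c.interp), c.act (π * σ) x = c.act π (c.act σ x)
  | .atom, a => rfl
  | .unit, _ => rfl
  | .prod c d, p => by
      exact congrArg₂ Prod.mk (PolyCode.act_mul π σ c p.1) (PolyCode.act_mul π σ d p.2)
  | .sum c d, x => by
      cases x with
      | inl a => exact congrArg Sum.inl (PolyCode.act_mul π σ c a)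
      | inr b => exact congrArg Sum.inr (PolyCode.act_mul π σ d b)

instance (c : PolyCode) : MulAction AtomPerm c.interp where
  smul π x := c.act π x
  one_smul x := c.act_one x
  mul_smul π σ x := c.act_mul π σ x

/-- `h : Σ* → M` is a monoid homomorphism from the free monoid of strings over `Σ`. -/
def IsListHom {X M : Type*} [Monoid M] (h : List X → M) : Prop :=
  h [] = 1 ∧ ∀ u v : List X, h (u ++ v) = h u * h v

/-- Equivariance of a function on strings, with the letterwise action on strings. -/
def ListHomEquivariant {X M : Type*} [MulAction AtomPerm X] [Monoid M] [MulAction AtomPerm M]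
    (h : List X → M) : Prop :=
  ∀ (π : AtomPerm) (l : List X), h (l.map fun x => π • x) = π • h l

/-- Condition (*): every monoid element has a letter representation, i.e. a letter with the
same image under `h` and the same least support. -/
def StarCondition (c : PolyCode) {M : Type*} [Monoid M] [MulAction AtomPerm M]
    (h : List c.interp → M) : Prop :=
  ∀ m : M, ∃ a : c.interp, h [a] = m ∧
    ∃ A : Finset Atom, IsLeastSupport A a ∧ IsLeastSupport A m

/-!
Least supports in a `J`-class all contain their intersection `T`. Take a finite set `A` of atoms
containing a support `B` of the multiplication and more than `2K` further atoms, where `K` bounds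
the size of least supports (orbit-finiteness). If an idempotent `e` of a regular `J`-class has an
atom `a ∉ T ∪ A` in its least support, swapping `a` with a suitable atom of `A \ B` gives another
idempotent of the class with fewer such atoms. So some idempotent of the class has least support
`T ∪ p` with `p ⊆ A`, and choosing `p` among these finitely many sets as a function of the class
yields a support that depends only on the `J`-class and commutes with `A`-automorphisms. By (*) it
is the least support of a letter. Choosing these letters on representatives of the orbits of
`A`-automorphisms and transporting them gives `E`; this is well defined because in a polynomial
set an automorphism fixing a letter fixes all its atoms.
-/

open Finset

theorem Finset.mem_image_perm {α : Type*} [DecidableEq α] {s : Finset α} {π : Equiv.Perm α}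
    {a : α} : a ∈ s.image π ↔ π⁻¹ a ∈ s := by
  constructor
  · intro h
    obtain ⟨b, hb, rfl⟩ := mem_image.1 h
    simpa using hb
  · exact fun h => mem_image.2 ⟨π⁻¹ a, h, by simp⟩

theorem Finset.image_perm_eq_self {α : Type*} [DecidableEq α] {s : Finset α}
    {π : Equiv.Perm α} (h : ∀ a ∈ s, π a = a) : s.image π = s := by
  rw [image_congr (g := id) h, image_id]

theorem Finset.exists_superset_card_sdiff_gt {α : Type*} [DecidableEq α] [Infinite α]
    (s : Finset α) (n : ℕ) : ∃ t, s ⊆ t ∧ n < #(t \ s) := by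
  obtain ⟨t, hst, ht⟩ := Infinite.exists_superset_card_eq s (#s + n + 1) (by omega)
  exact ⟨t, hst, by rw [card_sdiff_of_subset hst]; omega⟩

theorem Equiv.Perm.inv_fixes {α : Type*} {s : Finset α} {π : Equiv.Perm α}
    (h : ∀ a ∈ s, π a = a) : ∀ a ∈ s, π⁻¹ a = a :=
  fun a ha => Equiv.Perm.inv_eq_iff_eq.2 (h a ha).symm

section Supports

variable {X : Type*} [MulAction AtomPerm X]

theorem SupportedBy.smul {A : Finset Atom} {x : X} (π : AtomPerm) (hA : SupportedBy A x) :
    SupportedBy (A.image π) (π • x) := by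
  intro σ hσ
  have hconj : ∀ a ∈ A, (π⁻¹ * σ * π) a = a := fun a ha => by
    simp [hσ _ (mem_image_of_mem _ ha)]
  calc σ • π • x = π • (π⁻¹ * σ * π) • x := by
        rw [← mul_smul, ← mul_smul]; congr 1; group
    _ = π • x := by rw [hA _ hconj]

theorem IsLeastSupport.unique {A B : Finset Atom} {x : X} (hA : IsLeastSupport A x)
    (hB : IsLeastSupport B x) : A = B :=
  (hA.2 _ hB.1).antisymm (hB.2 _ hA.1)

theorem IsLeastSupport.smul {A : Finset Atom} {x : X} (π : AtomPerm)
    (hA : IsLeastSupport A x) : IsLeastSupport (A.image π) (π • x) := by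
  refine ⟨hA.1.smul π, fun B hB a ha => ?_⟩
  have hB' : SupportedBy (B.image ⇑π⁻¹) x := by simpa using hB.smul π⁻¹
  rw [mem_image_perm] at ha
  simpa [mem_image_perm] using hA.2 _ hB' ha

theorem leastSupport_smul_eq_image {sup : X → Finset Atom} (hsup : ∀ x, IsLeastSupport (sup x) x)
    (π : AtomPerm) (x : X) : sup (π • x) = (sup x).image π :=
  (hsup _).unique ((hsup x).smul π)

theorem OrbitFinite.exists_card_leastSupport_le {sup : X → Finset Atom} (hX : OrbitFinite X)
    (hsup : ∀ x, IsLeastSupport (sup x) x) : ∃ K, ∀ x, #(sup x) ≤ K := by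
  obtain ⟨-, _, reps, hreps⟩ := hX
  refine ⟨reps.sup fun r => #(sup r), fun x => ?_⟩
  obtain ⟨r, hr, π, -, rfl⟩ := hreps x
  rw [leastSupport_smul_eq_image hsup, card_image_of_injective _ π.injective]
  exact le_sup (f := fun r => #(sup r)) hr

/-- Choose on representatives of the orbits of `A`-automorphisms and transport; this is well
defined because each witness is fixed by every `A`-automorphism fixing its argument. -/
theorem exists_funSupportedBy_of_forall_exists {Y : Type*} [MulAction AtomPerm Y]
    (A : Finset Atom) (P : X → Y → Prop)
    (hP : ∀ π : AtomPerm, (∀ a ∈ A, π a = a) → ∀ x y, P x y → P (π • x) (π • y))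
    (hex : ∀ x, ∃ y, P x y ∧ ∀ π : AtomPerm, (∀ a ∈ A, π a = a) → π • x = x → π • y = y) :
    ∃ f : X → Y, FunSupportedBy A f ∧ ∀ x, P x (f x) := by
  let G := fixingSubgroup AtomPerm (A : Set Atom)
  have hG : ∀ π : AtomPerm, π ∈ G ↔ ∀ a ∈ A, π a = a := fun π =>
    (mem_fixingSubgroup_iff AtomPerm).trans (by simp)
  let rep (x : X) : X := (Quotient.mk (MulAction.orbitRel G X) x).out
  have hrep_smul : ∀ π : AtomPerm, (∀ a ∈ A, π a = a) → ∀ x, rep (π • x) = rep x :=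
    fun π hπ x => congrArg Quotient.out
      (Quotient.sound (s := MulAction.orbitRel G X) (MulAction.mem_orbit x (⟨π, (hG π).2 hπ⟩ : G)))
  have hrep : ∀ x, ∃ π : AtomPerm, (∀ a ∈ A, π a = a) ∧ π • rep x = x := by
    intro x
    obtain ⟨g, hg⟩ := Quotient.mk_out (s := MulAction.orbitRel G X) x
    refine ⟨(g : AtomPerm)⁻¹, Equiv.Perm.inv_fixes ((hG g).1 g.2), ?_⟩
    rw [inv_smul_eq_iff]
    exact hg.symm
  choose ρ hρA hρ using hrep
  choose y₀ hy₀ hy₀fix using hex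
  refine ⟨fun x => ρ x • y₀ (rep x), fun π hπ x => ?_, fun x => ?_⟩
  · let δ := (ρ (π • x))⁻¹ * π * ρ x
    have hδA : ∀ a ∈ A, δ a = a := by
      intro a ha
      show (ρ (π • x))⁻¹ (π (ρ x a)) = a
      rw [hρA x a ha, hπ a ha]
      exact Equiv.Perm.inv_fixes (hρA (π • x)) a ha
    have hδ : δ • rep x = rep x := by
      rw [mul_smul, mul_smul, hρ, inv_smul_eq_iff, ← hrep_smul π hπ x, hρ]
    have hδy : δ • y₀ (rep x) = y₀ (rep x) := hy₀fix _ δ hδA hδ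
    calc ρ (π • x) • y₀ (rep (π • x)) = ρ (π • x) • δ • y₀ (rep x) := by
          rw [hδy, hrep_smul π hπ x]
      _ = π • ρ x • y₀ (rep x) := by
          rw [← mul_smul, ← mul_smul]; simp only [δ, mul_assoc, mul_inv_cancel_left]
  · simpa only [hρ] using hP _ (hρA x) _ _ (hy₀ (rep x))

end Supports

namespace PolyCode

def atoms : (c : PolyCode) → c.interp → Finset Atom
  | .atom, a => {a}
  | .unit, _ => ∅
  | .prod c d, p => c.atoms p.1 ∪ d.atoms p.2
  | .sum c d, x => x.elim c.atoms d.atoms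

theorem smul_eq_self_iff : ∀ (c : PolyCode) (π : AtomPerm) (x : c.interp),
    π • x = x ↔ ∀ a ∈ c.atoms x, π a = a
  | .atom, π, (a : Atom) => by
      show π a = a ↔ ∀ b ∈ ({a} : Finset Atom), π b = b
      simp
  | .unit, _, _ => iff_of_true rfl (by simp [atoms])
  | .prod c d, π, ((x, y) : c.interp × d.interp) => by
      show ((π • x, π • y) : c.interp × d.interp) = (x, y) ↔ ∀ a ∈ c.atoms x ∪ d.atoms y, π a = a
      simp only [Prod.mk.injEq, mem_union, or_imp, forall_and]
      exact and_congr (smul_eq_self_iff c π x) (smul_eq_self_iff d π y)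
  | .sum c d, π, .inl a => by
      show Sum.inl (π • a) = Sum.inl a ↔ _
      rw [Sum.inl.injEq]
      exact smul_eq_self_iff c π a
  | .sum c d, π, .inr b => by
      show Sum.inr (π • b) = Sum.inr b ↔ _
      rw [Sum.inr.injEq]
      exact smul_eq_self_iff d π b

theorem leastSupport_subset_atoms {c : PolyCode} {Y : Type*} [MulAction AtomPerm Y]
    (g : c.interp → Y) (hg : ∀ (π : AtomPerm) x, g (π • x) = π • g x) {S : Finset Atom}
    {x : c.interp} (hS : IsLeastSupport S (g x)) : S ⊆ c.atoms x :=
  hS.2 _ fun π hπ => by rw [← hg, (c.smul_eq_self_iff π x).2 hπ]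

end PolyCode

section JEquiv

variable {M : Type*} [Monoid M]

theorem MInfix.trans {x y z : M} (h₁ : MInfix x y) (h₂ : MInfix y z) : MInfix x z := by
  obtain ⟨a, b, rfl⟩ := h₁
  obtain ⟨u, v, rfl⟩ := h₂
  exact ⟨u * a, b * v, by simp only [mul_assoc]⟩

theorem JEquiv.refl (x : M) : JEquiv x x :=
  ⟨⟨1, 1, by simp⟩, ⟨1, 1, by simp⟩⟩

theorem JEquiv.symm {x y : M} (h : JEquiv x y) : JEquiv y x := ⟨h.2, h.1⟩

theorem JEquiv.trans {x y z : M} (h₁ : JEquiv x y) (h₂ : JEquiv y z) : JEquiv x z :=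
  ⟨h₁.1.trans h₂.1, h₂.2.trans h₁.2⟩

def JRegular (m : M) : Prop := ∃ e, IsIdempotentElem e ∧ JEquiv e m

variable [MulAction AtomPerm M]

def MulSupportedBy (B : Finset Atom) (M : Type*) [Monoid M] [MulAction AtomPerm M] : Prop :=
  ∀ π : AtomPerm, (∀ a ∈ B, π a = a) → ∀ x y : M, π • (x * y) = π • x * π • y

variable {B : Finset Atom} {π : AtomPerm}

theorem IsIdempotentElem.smul (hB : MulSupportedBy B M) (hπ : ∀ a ∈ B, π a = a) {e : M}
    (he : IsIdempotentElem e) : IsIdempotentElem (π • e) := by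
  rw [IsIdempotentElem, ← hB π hπ, he.eq]

theorem MInfix.smul (hB : MulSupportedBy B M) (hπ : ∀ a ∈ B, π a = a) {x y : M}
    (h : MInfix x y) : MInfix (π • x) (π • y) := by
  obtain ⟨a, b, rfl⟩ := h
  exact ⟨π • a, π • b, by rw [hB π hπ, hB π hπ]⟩

theorem JEquiv.smul (hB : MulSupportedBy B M) (hπ : ∀ a ∈ B, π a = a) {x y : M}
    (h : JEquiv x y) : JEquiv (π • x) (π • y) :=
  ⟨h.1.smul hB hπ, h.2.smul hB hπ⟩

theorem JRegular.smul (hB : MulSupportedBy B M) (hπ : ∀ a ∈ B, π a = a) {m : M}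
    (hm : JRegular m) : JRegular (π • m) :=
  let ⟨e, he, hem⟩ := hm
  ⟨π • e, he.smul hB hπ, hem.smul hB hπ⟩

theorem jRegular_smul_iff (hB : MulSupportedBy B M) (hπ : ∀ a ∈ B, π a = a) {m : M} :
    JRegular (π • m) ↔ JRegular m :=
  ⟨fun h => by simpa using h.smul hB (Equiv.Perm.inv_fixes hπ), (·.smul hB hπ)⟩

end JEquiv

section CanonicalSupport

variable {M : Type*} [Monoid M] {sup : M → Finset Atom}
  {A B : Finset Atom} {π : AtomPerm}

open Classical in
noncomputable def commonSupport (sup : M → Finset Atom) (m : M) : Finset Atom :=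
  (sup m).filter fun a => ∀ f, JEquiv f m → a ∈ sup f

theorem mem_commonSupport {m : M} {a : Atom} :
    a ∈ commonSupport sup m ↔ ∀ f, JEquiv f m → a ∈ sup f := by
  simp only [commonSupport, mem_filter]
  exact ⟨And.right, fun h => ⟨h m (.refl m), h⟩⟩

theorem commonSupport_subset {m f : M} (h : JEquiv f m) : commonSupport sup m ⊆ sup f :=
  fun _ ha => mem_commonSupport.1 ha f h

theorem commonSupport_congr {m₁ m₂ : M} (h : JEquiv m₁ m₂) :
    commonSupport sup m₁ = commonSupport sup m₂ := by
  ext a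
  simp only [mem_commonSupport]
  exact ⟨fun H f hf => H f (hf.trans h.symm), fun H f hf => H f (hf.trans h)⟩

open Classical in
noncomputable def idempotentParts (sup : M → Finset Atom) (A : Finset Atom) (m : M) :
    Finset (Finset Atom) :=
  A.powerset.filter fun p =>
    ∃ e, IsIdempotentElem e ∧ JEquiv e m ∧ sup e = commonSupport sup m ∪ p

theorem mem_idempotentParts {m : M} {p : Finset Atom} :
    p ∈ idempotentParts sup A m ↔
      p ⊆ A ∧ ∃ e, IsIdempotentElem e ∧ JEquiv e m ∧ sup e = commonSupport sup m ∪ p := by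
  simp only [idempotentParts, mem_filter, mem_powerset]

theorem idempotentParts_congr {m₁ m₂ : M} (h : JEquiv m₁ m₂) :
    idempotentParts sup A m₁ = idempotentParts sup A m₂ := by
  ext p
  simp only [mem_idempotentParts, commonSupport_congr h]
  exact and_congr_right fun _ =>
    ⟨fun ⟨e, he, hem, hs⟩ => ⟨e, he, hem.trans h, hs⟩,
      fun ⟨e, he, hem, hs⟩ => ⟨e, he, hem.trans h.symm, hs⟩⟩

open Classical in
/-- The fallback `sup 1` only has to be fixed by `A`-automorphisms: for regular `J`-classes the
first branch is taken (`JRegular.idempotentParts_nonempty`). -/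
noncomputable def canonicalSupport (sup : M → Finset Atom) (A : Finset Atom) (m : M) :
    Finset Atom :=
  if (idempotentParts sup A m).Nonempty then
    commonSupport sup m ∪ Classical.epsilon (· ∈ idempotentParts sup A m)
  else sup 1

theorem canonicalSupport_congr {m₁ m₂ : M} (h : JEquiv m₁ m₂) :
    canonicalSupport sup A m₁ = canonicalSupport sup A m₂ := by
  simp only [canonicalSupport, idempotentParts_congr h, commonSupport_congr h]

theorem canonicalSupport_subset (h1A : sup 1 ⊆ A) (m : M) :
    canonicalSupport sup A m ⊆ sup m ∪ A := by
  unfold canonicalSupport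
  split_ifs with hne
  · exact union_subset_union (commonSupport_subset (.refl m))
      (mem_idempotentParts.1 (Classical.epsilon_spec hne)).1
  · exact h1A.trans subset_union_right

variable [MulAction AtomPerm M]

theorem commonSupport_smul (hsup : ∀ m, IsLeastSupport (sup m) m) (hB : MulSupportedBy B M)
    (hπ : ∀ a ∈ B, π a = a) (m : M) :
    commonSupport sup (π • m) = (commonSupport sup m).image π := by
  ext a
  rw [mem_image_perm, mem_commonSupport, mem_commonSupport]
  constructor
  · intro H f hf
    simpa only [leastSupport_smul_eq_image hsup, mem_image_perm] using H _ (hf.smul hB hπ)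
  · intro H f hf
    have hf' : JEquiv (π⁻¹ • f) m := by simpa using hf.smul hB (Equiv.Perm.inv_fixes hπ)
    simpa [leastSupport_smul_eq_image hsup, mem_image_perm, -mem_image] using H _ hf'

theorem idempotentParts_subset_smul (hsup : ∀ m, IsLeastSupport (sup m) m)
    (hB : MulSupportedBy B M) (hBA : B ⊆ A) (hπ : ∀ a ∈ A, π a = a) (m : M) :
    idempotentParts sup A m ⊆ idempotentParts sup A (π • m) := by
  have hπB : ∀ a ∈ B, π a = a := fun a ha => hπ a (hBA ha)
  intro p hp
  obtain ⟨hpA, e, he, hem, hs⟩ := mem_idempotentParts.1 hp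
  refine mem_idempotentParts.2 ⟨hpA, π • e, he.smul hB hπB, hem.smul hB hπB, ?_⟩
  rw [leastSupport_smul_eq_image hsup, hs, image_union, commonSupport_smul hsup hB hπB,
    image_perm_eq_self fun a ha => hπ a (hpA ha)]

theorem idempotentParts_smul (hsup : ∀ m, IsLeastSupport (sup m) m) (hB : MulSupportedBy B M)
    (hBA : B ⊆ A) (hπ : ∀ a ∈ A, π a = a) (m : M) :
    idempotentParts sup A (π • m) = idempotentParts sup A m := by
  refine (idempotentParts_subset_smul hsup hB hBA hπ m).antisymm' ?_
  simpa using idempotentParts_subset_smul hsup hB hBA (Equiv.Perm.inv_fixes hπ) (π • m)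

theorem canonicalSupport_smul (hsup : ∀ m, IsLeastSupport (sup m) m) (hB : MulSupportedBy B M)
    (hBA : B ⊆ A) (h1A : sup 1 ⊆ A) (hπ : ∀ a ∈ A, π a = a) (m : M) :
    canonicalSupport sup A (π • m) = (canonicalSupport sup A m).image π := by
  unfold canonicalSupport
  rw [idempotentParts_smul hsup hB hBA hπ, commonSupport_smul hsup hB fun a ha => hπ a (hBA ha)]
  split_ifs with hne
  · have hpA := (mem_idempotentParts.1 (Classical.epsilon_spec hne)).1
    rw [image_union, image_perm_eq_self fun a ha => hπ a (hpA ha)]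
  · exact (image_perm_eq_self fun a ha => hπ a (h1A ha)).symm

variable {K : ℕ}

/-- Some `f` in the `J`-class avoids `a`, and there is room in `A \ B` for an atom `b` outside
the supports of `e` and `f`; the swap of `a` and `b` fixes `B` and `f`, so it keeps `e` an
idempotent of the `J`-class while trading `a` for `b ∈ A`. -/
theorem exists_idempotent_swap (hsup : ∀ m, IsLeastSupport (sup m) m) (hB : MulSupportedBy B M)
    (hBA : B ⊆ A) (hK : ∀ m, #(sup m) ≤ K) (hAB : 2 * K < #(A \ B)) {m e : M}
    (he : IsIdempotentElem e) (hem : JEquiv e m) {a : Atom}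
    (ha : a ∈ sup e \ (commonSupport sup m ∪ A)) :
    ∃ e', IsIdempotentElem e' ∧ JEquiv e' m ∧
      #(sup e' \ (commonSupport sup m ∪ A)) < #(sup e \ (commonSupport sup m ∪ A)) := by
  obtain ⟨hae, haTA⟩ := mem_sdiff.1 ha
  rw [mem_union, not_or] at haTA
  obtain ⟨haT, haA⟩ := haTA
  obtain ⟨f, hfm, haf⟩ : ∃ f, JEquiv f m ∧ a ∉ sup f := by
    simpa [mem_commonSupport] using haT
  obtain ⟨b, hbAB, hbef⟩ : ∃ b ∈ A \ B, b ∉ sup e ∪ sup f := by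
    refine exists_mem_notMem_of_card_lt_card ((card_union_le _ _).trans_lt ?_)
    linarith [hK e, hK f]
  obtain ⟨hbA, hbB⟩ := mem_sdiff.1 hbAB
  rw [mem_union, not_or] at hbef
  obtain ⟨hbe, hbf⟩ := hbef
  set π := Equiv.swap a b
  have hπB : ∀ x ∈ B, π x = x := fun x hx =>
    Equiv.swap_apply_of_ne_of_ne (by rintro rfl; exact haA (hBA hx)) (by rintro rfl; exact hbB hx)
  have hπf : π • f = f := (hsup f).1 π fun x hx =>
    Equiv.swap_apply_of_ne_of_ne (by rintro rfl; exact haf hx) (by rintro rfl; exact hbf hx)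
  have hπem : JEquiv (π • e) m := by
    have hπef := (hem.trans hfm.symm).smul hB hπB
    rw [hπf] at hπef
    exact hπef.trans hfm
  refine ⟨π • e, he.smul hB hπB, hπem, (card_le_card ?_).trans_lt (card_erase_lt_of_mem ha)⟩
  intro x hx
  rw [mem_sdiff, leastSupport_smul_eq_image hsup, mem_image_perm, Equiv.swap_inv] at hx
  obtain ⟨hxe, hxTA⟩ := hx
  have hxa : x ≠ a := by
    rintro rfl
    rw [Equiv.swap_apply_left] at hxe
    exact hbe hxe
  have hxb : x ≠ b := by
    rintro rfl
    exact hxTA (mem_union_right _ hbA)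
  rw [Equiv.swap_apply_of_ne_of_ne hxa hxb] at hxe
  exact mem_erase.2 ⟨hxa, mem_sdiff.2 ⟨hxe, hxTA⟩⟩

theorem JRegular.exists_idempotent_support_subset (hsup : ∀ m, IsLeastSupport (sup m) m)
    (hB : MulSupportedBy B M) (hBA : B ⊆ A) (hK : ∀ m, #(sup m) ≤ K) (hAB : 2 * K < #(A \ B))
    {m : M} (hm : JRegular m) :
    ∃ e, IsIdempotentElem e ∧ JEquiv e m ∧ sup e ⊆ commonSupport sup m ∪ A := by
  obtain ⟨e, he, hem⟩ := hm
  induction hn : #(sup e \ (commonSupport sup m ∪ A)) using Nat.strong_induction_on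
    generalizing e with
  | _ n ih =>
    obtain h0 | ⟨a, ha⟩ := (sup e \ (commonSupport sup m ∪ A)).eq_empty_or_nonempty
    · exact ⟨e, he, hem, sdiff_eq_empty_iff_subset.1 h0⟩
    · obtain ⟨e', he', he'm, hlt⟩ := exists_idempotent_swap hsup hB hBA hK hAB he hem ha
      exact ih _ (hn ▸ hlt) e' he' he'm rfl

theorem JRegular.idempotentParts_nonempty (hsup : ∀ m, IsLeastSupport (sup m) m)
    (hB : MulSupportedBy B M) (hBA : B ⊆ A) (hK : ∀ m, #(sup m) ≤ K) (hAB : 2 * K < #(A \ B))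
    {m : M} (hm : JRegular m) : (idempotentParts sup A m).Nonempty := by
  obtain ⟨e, he, hem, hsub⟩ := hm.exists_idempotent_support_subset hsup hB hBA hK hAB
  refine ⟨sup e ∩ A, mem_idempotentParts.2 ⟨inter_subset_right, e, he, hem, ?_⟩⟩
  rw [union_inter_distrib_left, union_eq_right.2 (commonSupport_subset hem),
    inter_eq_left.2 hsub]

theorem exists_support_eq_canonicalSupport (hsup : ∀ m, IsLeastSupport (sup m) m)
    (hB : MulSupportedBy B M) (hBA : B ⊆ A) (hK : ∀ m, #(sup m) ≤ K) (hAB : 2 * K < #(A \ B))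
    (m : M) :
    ∃ t, sup t = canonicalSupport sup A m ∧ (JRegular m → IsIdempotentElem t ∧ JEquiv t m) := by
  by_cases hne : (idempotentParts sup A m).Nonempty
  · obtain ⟨-, e, he, hem, hs⟩ := mem_idempotentParts.1 (Classical.epsilon_spec hne)
    exact ⟨e, by rw [canonicalSupport, if_pos hne, hs], fun _ => ⟨he, hem⟩⟩
  · exact ⟨1, by rw [canonicalSupport, if_neg hne],
      fun hm => absurd (hm.idempotentParts_nonempty hsup hB hBA hK hAB) hne⟩

end CanonicalSupport

theorem exists_funSupportedBy_idempotent_representative {X M : Type*} [MulAction AtomPerm X]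
    [Monoid M] [MulAction AtomPerm M] {A B : Finset Atom} (hB : MulSupportedBy B M)
    (hBA : B ⊆ A) (g : X → M) (hg : ∀ (π : AtomPerm) x, g (π • x) = π • g x)
    (σ : M → Finset Atom)
    (hσ : ∀ π : AtomPerm, (∀ a ∈ A, π a = a) → ∀ m, σ (π • m) = (σ m).image π)
    (hσfix : ∀ x, ∀ π : AtomPerm, (∀ a ∈ A, π a = a) → π • x = x → ∀ a ∈ σ (g x), π a = a)
    (hrep : ∀ m, ∃ y, IsLeastSupport (σ m) y ∧ IsLeastSupport (σ m) (g y) ∧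
      (JRegular m → IsIdempotentElem (g y) ∧ JEquiv (g y) m)) :
    ∃ E : X → X, FunSupportedBy A E ∧ ∀ x, IsLeastSupport (σ (g x)) (E x) ∧
      IsLeastSupport (σ (g x)) (g (E x)) ∧
      (JRegular (g x) → IsIdempotentElem (g (E x)) ∧ JEquiv (g (E x)) (g x)) := by
  refine exists_funSupportedBy_of_forall_exists A (fun x y => IsLeastSupport (σ (g x)) y ∧
    IsLeastSupport (σ (g x)) (g y) ∧ (JRegular (g x) → IsIdempotentElem (g y) ∧ JEquiv (g y) (g x)))
    ?_ fun x => ?_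
  · intro π hπ x y ⟨hy, hgy, hreg⟩
    have hπB : ∀ a ∈ B, π a = a := fun a ha => hπ a (hBA ha)
    rw [hg, hσ π hπ, hg]
    refine ⟨hy.smul π, hgy.smul π, fun hreg' => ?_⟩
    obtain ⟨he, hJ⟩ := hreg ((jRegular_smul_iff hB hπB).1 hreg')
    exact ⟨he.smul hB hπB, hJ.smul hB hπB⟩
  · obtain ⟨y, hy, hgy, hreg⟩ := hrep (g x)
    exact ⟨y, ⟨hy, hgy, hreg⟩, fun π hπA hπx => hy.1 π (hσfix x π hπA hπx)⟩

theorem idempotent_letter_representation_general (c : PolyCode)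
    {M : Type*} [Monoid M] [MulAction AtomPerm M] (hM : OrbitFiniteMonoid M)
    (h : List c.interp → M) (hEqv : ListHomEquivariant h)
    (hStar : StarCondition c h) :
    ∃ E : c.interp → c.interp,
      (∃ A : Finset Atom, FunSupportedBy A E) ∧
      (∀ a : c.interp, (∃ e : M, e * e = e ∧ JEquiv e (h [a])) →
        (h [E a] * h [E a] = h [E a] ∧ JEquiv (h [E a]) (h [a]) ∧
          ∃ A : Finset Atom, IsLeastSupport A (E a) ∧ IsLeastSupport A (h [E a]))) ∧
      (∀ a₁ a₂ : c.interp, JEquiv (h [a₁]) (h [a₂]) →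
        ∃ A : Finset Atom, IsLeastSupport A (E a₁) ∧ IsLeastSupport A (E a₂)) := by
  obtain ⟨hfin, B, hB⟩ := hM
  choose ltr hltr sup hlsa hlsm using hStar
  have hh : ∀ (π : AtomPerm) (a : c.interp), h [π • a] = π • h [a] := fun π a => hEqv π [a]
  obtain ⟨K, hK⟩ := hfin.exists_card_leastSupport_le hlsm
  obtain ⟨A, hA, hcard⟩ := exists_superset_card_sdiff_gt (B ∪ sup 1) (2 * K)
  have hBA : B ⊆ A := subset_union_left.trans hA
  have h1A : sup 1 ⊆ A := subset_union_right.trans hA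
  have hAB : 2 * K < #(A \ B) :=
    hcard.trans_le (card_le_card (sdiff_subset_sdiff subset_rfl subset_union_left))
  obtain ⟨E, hEA, hE⟩ := exists_funSupportedBy_idempotent_representative hB hBA (fun a => h [a])
    hh (canonicalSupport sup A) (fun _ => canonicalSupport_smul hlsm hB hBA h1A)
    (fun x π hπA hπx a ha => (mem_union.1 (canonicalSupport_subset h1A _ ha)).elim
      (fun ha => (c.smul_eq_self_iff π x).1 hπx a
        (c.leastSupport_subset_atoms (fun a => h [a]) hh (hlsm _) ha))
      (hπA a))
    (fun m => by
      obtain ⟨t, ht, hreg⟩ := exists_support_eq_canonicalSupport hlsm hB hBA hK hAB m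
      exact ⟨ltr t, ht ▸ hlsa t, by rw [hltr, ← ht]; exact hlsm t, by rwa [hltr]⟩)
  exact ⟨E, ⟨A, hEA⟩,
    fun a ha => ⟨((hE a).2.2 ha).1, ((hE a).2.2 ha).2, _, (hE a).1, (hE a).2.1⟩,
    fun a₁ a₂ h12 => ⟨_, (hE a₁).1, canonicalSupport_congr h12 ▸ (hE a₂).1⟩⟩

/-- For an equivariant homomorphism `h : Σ* → M` into an orbit-finite monoid satisfying
condition (*), there is a finitely supported function `E : Σ → Σ` such that
(a) for every `a`, if the J-class of `h(a)` contains an idempotent, then `E(a)` is a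
letter representation of an idempotent J-equivalent to `h(a)`; and
(b) letters whose `h`-images are J-equivalent get `E`-values with the same least support. -/
theorem idempotent_letter_representation (c : PolyCode)
    {M : Type*} [Monoid M] [MulAction AtomPerm M] (hM : OrbitFiniteMonoid M)
    (h : List c.interp → M) (hHom : IsListHom h) (hEqv : ListHomEquivariant h)
    (hStar : StarCondition c h) :
    ∃ E : c.interp → c.interp,
      (∃ A : Finset Atom, FunSupportedBy A E) ∧
      (∀ a : c.interp, (∃ e : M, e * e = e ∧ JEquiv e (h [a])) →
        (h [E a] * h [E a] = h [E a] ∧ JEquiv (h [E a]) (h [a]) ∧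
          ∃ A : Finset Atom, IsLeastSupport A (E a) ∧ IsLeastSupport A (h [E a]))) ∧
      (∀ a₁ a₂ : c.interp, JEquiv (h [a₁]) (h [a₂]) →
        ∃ A : Finset Atom, IsLeastSupport A (E a₁) ∧ IsLeastSupport A (E a₂)) :=
  idempotent_letter_representation_general c hM h hEqv hStar
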